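/- arXiv:1506.03043 — 2 statements merged into one kernel-verified Lean document; each statement's English description precedes it below -/
import Mathlib

section
/- Let n ≥ 2, I = [a,b], a_i ∈ C^{n-i}(I), M ∈ ℝ, and let y_1,…,y_n be the fundamental system of solutions of T_n[M]u = 0 determined by the initial conditions y_k^{(n-k)}(a) = 1 and y_k^{(n-j)}(a) = 0 for j ∈ {1,…,n}, j ≠ k. Then, for 1 ≤ k ≤ n−1, there exists a nontrivial solution u of T_n[M]u(t) = 0 on [a,b] satisfying the (k, n−k) boundary conditions u(a) = ⋯ = u^{(k-1)}(a) = 0, u(b) = ⋯ = u^{(n-k-1)}(b) = 0 if and only if W^n_{n−k}[M](b) = 0. -/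
open Set MeasureTheory

/-- `u` has at most `N` zeros on `J`, counted with multiplicity
(derivatives are taken within `J`). -/
def AtMostZeros (N : ℕ) (J : Set ℝ) (u : ℝ → ℝ) : Prop :=
  ∀ (r : ℕ) (t : Fin r → ℝ) (m : Fin r → ℕ),
    Function.Injective t → (∀ i, t i ∈ J) → (∀ i, 0 < m i) →
    (∀ i, ∀ j, j < m i → iteratedDerivWithin j u J (t i) = 0) →
    ∑ i, m i ≤ N

/-- `Tₙ[M] u (t) = u⁽ⁿ⁾(t) + a₁(t) u⁽ⁿ⁻¹⁾(t) + ⋯ + aₙ₋₁(t) u'(t) + (aₙ(t) + M) u(t)`,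
with derivatives taken within `S` (here `A i` denotes `a_{i+1}`). -/
noncomputable def TnOp (n : ℕ) (A : Fin n → ℝ → ℝ) (M : ℝ) (S : Set ℝ)
    (u : ℝ → ℝ) (t : ℝ) : ℝ :=
  iteratedDerivWithin n u S t
    + ∑ i : Fin n, A i t * iteratedDerivWithin (n - 1 - i.val) u S t + M * u t

/-- The equation `Tₙ[M] u = 0` is disconjugate on `J`. -/
def TnDisconj (n : ℕ) (A : Fin n → ℝ → ℝ) (M : ℝ) (J : Set ℝ) : Prop :=
  ∀ u : ℝ → ℝ, ContDiffOn ℝ n u J → (∀ t ∈ J, TnOp n A M J u t = 0) →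
    (∃ t ∈ J, u t ≠ 0) → AtMostZeros (n - 1) J u

/-- `u ∈ X_k`: `u ∈ Cⁿ([a,b])` satisfying the `(k, n-k)` boundary conditions
`u(a) = ⋯ = u⁽ᵏ⁻¹⁾(a) = 0`, `u(b) = ⋯ = u⁽ⁿ⁻ᵏ⁻¹⁾(b) = 0`. -/
def MemX (n : ℕ) (a b : ℝ) (k : ℕ) (u : ℝ → ℝ) : Prop :=
  ContDiffOn ℝ n u (Icc a b) ∧
  (∀ j < k, iteratedDerivWithin j u (Icc a b) a = 0) ∧
  (∀ j < n - k, iteratedDerivWithin j u (Icc a b) b = 0)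

/-- `lam` is an eigenvalue of `Tₙ[M]` in `X_k`. -/
def IsEigen (n : ℕ) (A : Fin n → ℝ → ℝ) (M a b : ℝ) (k : ℕ) (lam : ℝ) : Prop :=
  ∃ u : ℝ → ℝ, MemX n a b k u ∧ (∃ t ∈ Icc a b, u t ≠ 0) ∧
    ∀ t ∈ Icc a b, TnOp n A M (Icc a b) u t = lam * u t

/-- The Wronskian `Wⁿₗ[M](t)` built from the fundamental system `y₁, …, yₙ`
(derivatives taken within `S`); only used for `ℓ ≤ n`. -/
noncomputable def Wron (n ℓ : ℕ) (y : Fin n → ℝ → ℝ) (S : Set ℝ) (t : ℝ) : ℝ :=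
  Matrix.det (Matrix.of fun i j : Fin ℓ =>
    iteratedDerivWithin j.val (if h : i.val < n then y ⟨i.val, h⟩ else 0) S t)

lemma iterZeroFun {S : Set ℝ} (hS : UniqueDiffOn ℝ S) {x : ℝ} (hx : x ∈ S) (m : ℕ) :
    iteratedDerivWithin m (fun _ : ℝ => (0:ℝ)) S x = 0 := by
  have h1 : (fun _ : ℝ => (0:ℝ)) = (0:ℝ) • (fun _ : ℝ => (0:ℝ)) := by funext t; simp
  rw [h1, iteratedDerivWithin_const_smul hx hS (0:ℝ) contDiffWithinAt_const, zero_smul]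

lemma sumD {n : ℕ} {S : Set ℝ} (hS : UniqueDiffOn ℝ S) {x : ℝ} (hx : x ∈ S)
    {ι : Type*} (s : Finset ι) (c : ι → ℝ) (f : ι → ℝ → ℝ)
    (hf : ∀ i, ContDiffOn ℝ n (f i) S) {j : ℕ} (hj : j ≤ n) :
    iteratedDerivWithin j (fun t => ∑ i ∈ s, c i * f i t) S x
      = ∑ i ∈ s, c i * iteratedDerivWithin j (f i) S x := by
  classical
  induction s using Finset.induction_on with
  | empty => simpa using iterZeroFun hS hx j
  | insert a s ha ih =>
    have hcj : ∀ i, ContDiffOn ℝ (j:ℕ) (f i) S := fun i => (hf i).of_le (by exact_mod_cast hj)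
    have hsum : ContDiffOn ℝ (j:ℕ) (fun t => ∑ i ∈ s, c i * f i t) S := by
      apply ContDiffOn.sum
      intro i _
      simpa [smul_eq_mul] using (hcj i).const_smul (c i)
    have h1 : (fun t => ∑ i ∈ insert a s, c i * f i t)
        = (fun t => c a * f a t) + (fun t => ∑ i ∈ s, c i * f i t) := by
      funext t; simp [Finset.sum_insert ha]
    have hca : ContDiffOn ℝ (j:ℕ) (fun t => c a * f a t) S := by
      simpa [smul_eq_mul] using (hcj a).const_smul (c a)
    rw [h1, iteratedDerivWithin_add hx hS (hca x hx) (hsum x hx)]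
    rw [Finset.sum_insert ha, ih]
    congr 1
    exact iteratedDerivWithin_const_mul hx hS (c a) (hcj a x hx)

lemma sumCD {n : ℕ} {S : Set ℝ} {ι : Type*} (s : Finset ι) (c : ι → ℝ) (f : ι → ℝ → ℝ)
    (hf : ∀ i, ContDiffOn ℝ n (f i) S) :
    ContDiffOn ℝ n (fun t => ∑ i ∈ s, c i * f i t) S := by
  apply ContDiffOn.sum
  intro i _
  simpa [smul_eq_mul] using (hf i).const_smul (c i)

lemma TnLin {n : ℕ} (A : Fin n → ℝ → ℝ) (M : ℝ) {S : Set ℝ} (hS : UniqueDiffOn ℝ S)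
    {x : ℝ} (hx : x ∈ S) {ι : Type*} (s : Finset ι) (c : ι → ℝ) (f : ι → ℝ → ℝ)
    (hf : ∀ i, ContDiffOn ℝ n (f i) S) :
    TnOp n A M S (fun t => ∑ i ∈ s, c i * f i t) x
      = ∑ i ∈ s, c i * TnOp n A M S (f i) x := by
  unfold TnOp
  rw [sumD hS hx s c f hf le_rfl]
  have hq : ∀ q : Fin n, iteratedDerivWithin (n - 1 - q.val) (fun t => ∑ i ∈ s, c i * f i t) S x
      = ∑ i ∈ s, c i * iteratedDerivWithin (n - 1 - q.val) (f i) S x := fun q =>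
    sumD hS hx s c f hf (by omega)
  simp only [hq]
  simp only [mul_add, Finset.mul_sum, Finset.sum_add_distrib]
  congr 1
  · congr 1
    rw [Finset.sum_comm]
    exact Finset.sum_congr rfl fun i _ => Finset.sum_congr rfl fun q _ => by ring
  · exact Finset.sum_congr rfl fun i _ => by ring

lemma TnSub {n : ℕ} (A : Fin n → ℝ → ℝ) (M : ℝ) {S : Set ℝ} (hS : UniqueDiffOn ℝ S)
    {x : ℝ} (hx : x ∈ S) {f g : ℝ → ℝ}
    (hf : ContDiffOn ℝ n f S) (hg : ContDiffOn ℝ n g S) :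
    TnOp n A M S (fun t => f t - g t) x = TnOp n A M S f x - TnOp n A M S g x := by
  unfold TnOp
  have hsub : ∀ j : ℕ, j ≤ n → iteratedDerivWithin j (fun t => f t - g t) S x
      = iteratedDerivWithin j f S x - iteratedDerivWithin j g S x := by
    intro j hj
    have h1 : (fun t => f t - g t) = f - g := rfl
    rw [h1, iteratedDerivWithin_sub (n := j) hx hS (hf.of_le (by exact_mod_cast hj) x hx)
      (hg.of_le (by exact_mod_cast hj) x hx)]
  rw [hsub n le_rfl]
  have hq : ∀ q : Fin n, iteratedDerivWithin (n - 1 - q.val) (fun t => f t - g t) S x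
      = iteratedDerivWithin (n - 1 - q.val) f S x - iteratedDerivWithin (n - 1 - q.val) g S x :=
    fun q => hsub _ (by omega)
  simp only [hq]
  rw [Finset.sum_congr rfl (fun q _ => mul_sub (A q x) _ _), Finset.sum_sub_distrib]
  ring

lemma uniqueZero (n : ℕ) (hn : 1 ≤ n) (a b : ℝ) (hab : a < b)
    (A : Fin n → ℝ → ℝ) (hA : ∀ i, ContinuousOn (A i) (Icc a b)) (M : ℝ)
    (u : ℝ → ℝ) (hu : ContDiffOn ℝ n u (Icc a b))
    (hT : ∀ t ∈ Icc a b, TnOp n A M (Icc a b) u t = 0)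
    (h0 : ∀ j < n, iteratedDerivWithin j u (Icc a b) a = 0) :
    ∀ t ∈ Icc a b, u t = 0 := by
  have hS : UniqueDiffOn ℝ (Icc a b) := uniqueDiffOn_Icc hab
  -- bound on the coefficients
  choose C hC using fun i => IsCompact.exists_bound_of_continuousOn isCompact_Icc (hA i)
  set C0 : ℝ := ∑ i : Fin n, |C i| with hC0def
  have hC0nn : 0 ≤ C0 := Finset.sum_nonneg fun i _ => abs_nonneg _
  have hC0 : ∀ i : Fin n, ∀ t ∈ Icc a b, |A i t| ≤ C0 := by
    intro i t ht
    calc |A i t| ≤ C i := by simpa using hC i t ht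
    _ ≤ |C i| := le_abs_self _
    _ ≤ C0 := Finset.single_le_sum (f := fun j : Fin n => |C j|)
        (fun j _ => abs_nonneg _) (Finset.mem_univ i)
  set Kr : ℝ := 1 + n * C0 + |M| with hKrdef
  have hKrnn : 0 ≤ Kr := by positivity
  set K : NNReal := Real.toNNReal Kr with hKdef
  have hKco : (K : ℝ) = Kr := Real.coe_toNNReal _ hKrnn
  -- clamp
  set p : ℝ → ℝ := fun t => max a (min b t) with hpdef
  have hpmem : ∀ t, p t ∈ Icc a b := fun t =>
    ⟨le_max_left _ _, max_le hab.le (min_le_left _ _)⟩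
  have hpid : ∀ t ∈ Icc a b, p t = t := by
    intro t ht
    simp only [hpdef]
    rw [min_eq_right ht.2, max_eq_right ht.1]
  -- vector field
  set v : ℝ → (Fin n → ℝ) → (Fin n → ℝ) := fun t x i =>
    if h : i.val + 1 < n then x ⟨i.val + 1, h⟩
    else -(∑ q : Fin n, A q (p t) * x ⟨n - 1 - q.val, by omega⟩) - M * x ⟨0, by omega⟩
    with hvdef
  have hv0 : ∀ t, v t 0 = 0 := by
    intro t; funext i; simp [hvdef]
  have hlip : ∀ t, LipschitzWith K (v t) := by
    intro t
    apply LipschitzWith.of_dist_le_mul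
    intro x z
    have hK0 : (0:ℝ) ≤ (K:ℝ) * dist x z := mul_nonneg (NNReal.coe_nonneg K) dist_nonneg
    rw [dist_pi_le_iff hK0]
    intro i
    by_cases h : i.val + 1 < n
    · simp only [hvdef, dif_pos h]
      calc dist (x ⟨i.val+1, h⟩) (z ⟨i.val+1, h⟩) ≤ dist x z := dist_le_pi_dist x z _
      _ = 1 * dist x z := (one_mul _).symm
      _ ≤ (K:ℝ) * dist x z := by
          apply mul_le_mul_of_nonneg_right _ dist_nonneg
          rw [hKco, hKrdef]
          have h1 : 0 ≤ (n:ℝ) * C0 := by positivity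
          have h2 : 0 ≤ |M| := abs_nonneg M
          linarith
    · simp only [hvdef, dif_neg h]
      rw [Real.dist_eq]
      have hdc : ∀ (j : Fin n), |x j - z j| ≤ dist x z := by
        intro j
        have := dist_le_pi_dist x z j
        rwa [Real.dist_eq] at this
      calc |(-(∑ q : Fin n, A q (p t) * x ⟨n - 1 - q.val, by omega⟩) - M * x ⟨0, by omega⟩)
            - (-(∑ q : Fin n, A q (p t) * z ⟨n - 1 - q.val, by omega⟩) - M * z ⟨0, by omega⟩)|
          = |(∑ q : Fin n, A q (p t) * (x ⟨n - 1 - q.val, by omega⟩ - z ⟨n - 1 - q.val, by omega⟩))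
              + M * (x ⟨0, by omega⟩ - z ⟨0, by omega⟩)| := by
            rw [← abs_neg]
            congr 1
            rw [Finset.sum_congr rfl (fun q _ => mul_sub (A q (p t)) _ _), Finset.sum_sub_distrib]
            ring
        _ ≤ |∑ q : Fin n, A q (p t) * (x ⟨n - 1 - q.val, by omega⟩ - z ⟨n - 1 - q.val, by omega⟩)|
              + |M * (x ⟨0, by omega⟩ - z ⟨0, by omega⟩)| := abs_add_le _ _
        _ ≤ (∑ q : Fin n, C0 * dist x z) + |M| * dist x z := by
            gcongr
            · calc |∑ q : Fin n, A q (p t) * (x ⟨n-1-q.val, by omega⟩ - z ⟨n-1-q.val, by omega⟩)|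
                  ≤ ∑ q : Fin n, |A q (p t) * (x ⟨n-1-q.val, by omega⟩ - z ⟨n-1-q.val, by omega⟩)| :=
                    Finset.abs_sum_le_sum_abs _ _
                _ ≤ ∑ q : Fin n, C0 * dist x z := by
                    apply Finset.sum_le_sum
                    intro q _
                    rw [abs_mul]
                    exact mul_le_mul (hC0 q _ (hpmem t)) (hdc _) (abs_nonneg _) hC0nn
            · rw [abs_mul]
              exact mul_le_mul_of_nonneg_left (hdc _) (abs_nonneg _)
        _ = (n * C0 + |M|) * dist x z := by
            rw [Finset.sum_const, Finset.card_univ, Fintype.card_fin]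
            ring
        _ ≤ (K:ℝ) * dist x z := by
            apply mul_le_mul_of_nonneg_right _ dist_nonneg
            rw [hKco, hKrdef]; linarith
  -- the vector of derivatives
  set g : ℝ → (Fin n → ℝ) := fun t i => iteratedDerivWithin i.val u (Icc a b) t with hgdef
  have hgc : ContinuousOn g (Icc a b) := by
    apply continuousOn_pi.2
    intro i
    exact hu.continuousOn_iteratedDerivWithin (by exact_mod_cast i.isLt.le) hS
  have hg' : ∀ t ∈ Ico a b, HasDerivWithinAt g (v t (g t)) (Ici t) t := by
    intro t ht
    have htI : t ∈ Icc a b := ⟨ht.1, ht.2.le⟩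
    apply hasDerivWithinAt_pi.2
    intro i
    have hdw : DifferentiableWithinAt ℝ (iteratedDerivWithin i.val u (Icc a b)) (Icc a b) t :=
      hu.differentiableOn_iteratedDerivWithin (by exact_mod_cast i.isLt) hS t htI
    have hd1 : HasDerivWithinAt (iteratedDerivWithin i.val u (Icc a b))
        (iteratedDerivWithin (i.val + 1) u (Icc a b) t) (Icc a b) t := by
      have := hdw.hasDerivWithinAt
      rwa [← iteratedDerivWithin_succ] at this
    have hd2 : HasDerivWithinAt (iteratedDerivWithin i.val u (Icc a b))
        (iteratedDerivWithin (i.val + 1) u (Icc a b) t) (Ici t) t :=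
      hd1.mono_of_mem_nhdsWithin (Icc_mem_nhdsGE_of_mem ht)
    have hvv : v t (g t) i = iteratedDerivWithin (i.val + 1) u (Icc a b) t := by
      by_cases h : i.val + 1 < n
      · simp [hvdef, hgdef, dif_pos h]
      · have hin : i.val = n - 1 := by omega
        have hTt := hT t htI
        unfold TnOp at hTt
        simp only [hvdef, dif_neg h, hgdef, hpid t htI]
        have h00 : iteratedDerivWithin 0 u (Icc a b) t = u t := by
          rw [iteratedDerivWithin_zero]
        rw [h00]
        have : i.val + 1 = n := by omega
        rw [this]
        linarith [hTt]
    rw [hvv]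
    exact hd2
  have hga : g a = 0 := by
    funext i
    exact h0 i.val i.isLt
  have hzero' : ∀ t ∈ Ico a b, HasDerivWithinAt (fun _ : ℝ => (0 : Fin n → ℝ))
      (v t ((fun _ : ℝ => (0 : Fin n → ℝ)) t)) (Ici t) t := by
    intro t ht
    rw [hv0 t]
    exact hasDerivWithinAt_const _ _ _
  have heq : EqOn g (fun _ => (0 : Fin n → ℝ)) (Icc a b) :=
    ODE_solution_unique hlip hgc hg' continuousOn_const hzero' (by simpa using hga)
  intro t ht
  have := congrFun (heq ht) ⟨0, by omega⟩
  simpa [hgdef] using this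

/-- There is a nontrivial solution of `Tₙ[M]u = 0` satisfying the `(k, n-k)` boundary
conditions on `[a,b]` iff `Wⁿ_{n-k}[M](b) = 0`. -/
theorem bvp_solution_iff_wronskian_eq_zero
    (n : ℕ) (hn : 2 ≤ n) (a b : ℝ) (hab : a < b)
    (A : Fin n → ℝ → ℝ)
    (hA : ∀ i : Fin n, ContDiffOn ℝ (n - 1 - i.val : ℕ) (A i) (Icc a b))
    (M : ℝ)
    -- `y` is the fundamental system of solutions of `Tₙ[M] u = 0` with
    -- `yₖ⁽ⁿ⁻ᵏ⁾(a) = 1` and `yₖ⁽ⁿ⁻ʲ⁾(a) = 0` for `j ≠ k`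
    (y : Fin n → ℝ → ℝ)
    (hy : ∀ i : Fin n, ContDiffOn ℝ n (y i) (Icc a b) ∧
      (∀ t ∈ Icc a b, TnOp n A M (Icc a b) (y i) t = 0) ∧
      (∀ m < n, iteratedDerivWithin m (y i) (Icc a b) a
        = if m = n - 1 - i.val then 1 else 0))
    (k : ℕ) (hk1 : 1 ≤ k) (hk2 : k ≤ n - 1) :
    (∃ u : ℝ → ℝ, MemX n a b k u ∧ (∃ t ∈ Icc a b, u t ≠ 0) ∧
        ∀ t ∈ Icc a b, TnOp n A M (Icc a b) u t = 0) ↔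
      Wron n (n - k) y (Icc a b) b = 0 := by
  classical
  have hS : UniqueDiffOn ℝ (Icc a b) := uniqueDiffOn_Icc hab
  have haS : a ∈ Icc a b := left_mem_Icc.2 hab.le
  have hbS : b ∈ Icc a b := right_mem_Icc.2 hab.le
  have hkn : k < n := by omega
  have hnkn : n - k ≤ n := by omega
  have hAc : ∀ i, ContinuousOn (A i) (Icc a b) := fun i => (hA i).continuousOn
  have hlt : ∀ i : Fin (n - k), i.val < n := fun i => lt_of_lt_of_le i.isLt hnkn
  have hyc : ∀ i : Fin n, ContDiffOn ℝ n (y i) (Icc a b) := fun i => (hy i).1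
  set Mat : Matrix (Fin (n - k)) (Fin (n - k)) ℝ :=
    Matrix.of fun i j : Fin (n - k) =>
      iteratedDerivWithin j.val (y ⟨i.val, hlt i⟩) (Icc a b) b with hMat
  have hW : Wron n (n - k) y (Icc a b) b = Mat.det := by
    unfold Wron
    congr 1
    ext i j
    simp only [Matrix.of_apply, hMat]
    rw [dif_pos (hlt i)]
  constructor
  · rintro ⟨u, ⟨hucd, hba, hbb⟩, ⟨t0, ht0, hu0⟩, hTu⟩
    set c : Fin n → ℝ := fun i => iteratedDerivWithin (n - 1 - i.val) u (Icc a b) a with hcdef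
    set sf : ℝ → ℝ := fun t => ∑ i : Fin n, c i * y i t with hsf
    have hscd : ContDiffOn ℝ n sf (Icc a b) := sumCD _ _ _ hyc
    have hwcd : ContDiffOn ℝ n (fun t => u t - sf t) (Icc a b) := hucd.sub hscd
    have hwT : ∀ t ∈ Icc a b, TnOp n A M (Icc a b) (fun t => u t - sf t) t = 0 := by
      intro t ht
      rw [TnSub A M hS ht hucd hscd, hTu t ht, hsf, TnLin A M hS ht _ c y hyc]
      simp only [Finset.sum_congr rfl (fun i _ => by rw [(hy i).2.1 t ht] : ∀ i ∈ Finset.univ,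
        c i * TnOp n A M (Icc a b) (y i) t = c i * 0)]
      simp
    have hw0 : ∀ j < n, iteratedDerivWithin j (fun t => u t - sf t) (Icc a b) a = 0 := by
      intro j hj
      have h1 : (fun t => u t - sf t) = u - sf := rfl
      rw [h1, iteratedDerivWithin_sub (n := j) haS hS (hucd.of_le (by exact_mod_cast hj.le) a haS)
        (hscd.of_le (by exact_mod_cast hj.le) a haS)]
      have h2 : iteratedDerivWithin j sf (Icc a b) a
          = ∑ i : Fin n, c i * iteratedDerivWithin j (y i) (Icc a b) a :=
        sumD hS haS _ c y hyc hj.le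
      have h3 : ∑ i : Fin n, c i * iteratedDerivWithin j (y i) (Icc a b) a
          = c ⟨n - 1 - j, by omega⟩ := by
        rw [Finset.sum_congr rfl (fun i _ => by rw [(hy i).2.2 j hj])]
        rw [Finset.sum_eq_single (⟨n - 1 - j, by omega⟩ : Fin n)]
        · rw [if_pos (by simp; omega)]
          ring
        · intro i _ hne
          rw [if_neg, mul_zero]
          intro hcon
          apply hne
          apply Fin.ext
          have := i.isLt
          simp only []
          omega
        · intro habs
          exact absurd (Finset.mem_univ _) habs
      have h4 : c ⟨n - 1 - j, by omega⟩ = iteratedDerivWithin j u (Icc a b) a := by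
        simp only [hcdef]
        congr 1
        omega
      rw [h2, h3, h4, sub_self]
    have hwz := uniqueZero n (by omega) a b hab A hAc M _ hwcd hwT hw0
    have hEq : Set.EqOn u sf (Icc a b) := by
      intro t ht
      have := hwz t ht
      simp only [sub_eq_zero] at this
      exact this
    have hczero : ∀ i : Fin n, n - k ≤ i.val → c i = 0 := by
      intro i hi
      have := i.isLt
      exact hba (n - 1 - i.val) (by omega)
    set c' : Fin (n - k) → ℝ := fun i => c ⟨i.val, hlt i⟩ with hc'def
    have hc'ne : c' ≠ 0 := by
      intro hzz
      have hcall : ∀ i : Fin n, c i = 0 := by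
        intro i
        by_cases h : i.val < n - k
        · have := congrFun hzz ⟨i.val, h⟩
          simpa [hc'def] using this
        · exact hczero i (by omega)
      apply hu0
      rw [hEq ht0, hsf]
      simp [hcall]
    have hvm : Matrix.vecMul c' Mat = 0 := by
      funext j
      have hjlt : j.val < n - k := j.isLt
      have hDb : iteratedDerivWithin j.val u (Icc a b) b
          = ∑ i : Fin n, c i * iteratedDerivWithin j.val (y i) (Icc a b) b := by
        rw [iteratedDerivWithin_congr hEq hbS, hsf]
        exact sumD hS hbS _ c y hyc (by omega)
      have hub : iteratedDerivWithin j.val u (Icc a b) b = 0 := hbb j.val hjlt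
      have hsplit : ∑ i : Fin n, c i * iteratedDerivWithin j.val (y i) (Icc a b) b
          = ∑ i : Fin (n - k), c' i * iteratedDerivWithin j.val (y ⟨i.val, hlt i⟩) (Icc a b) b := by
        let e : Fin (n - k) ↪ Fin n :=
          ⟨fun i => ⟨i.val, hlt i⟩, fun i1 i2 h12 => Fin.ext (by simpa using congrArg Fin.val h12)⟩
        have h5 : ∑ i : Fin n, c i * iteratedDerivWithin j.val (y i) (Icc a b) b
            = ∑ i ∈ Finset.univ.map e, c i * iteratedDerivWithin j.val (y i) (Icc a b) b := by
          apply (Finset.sum_subset (Finset.subset_univ _) _).symm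
          intro x _ hx
          have hxge : n - k ≤ x.val := by
            by_contra hcon
            push_neg at hcon
            exact hx (Finset.mem_map.2 ⟨⟨x.val, hcon⟩, Finset.mem_univ _, Fin.ext rfl⟩)
          rw [hczero x hxge, zero_mul]
        rw [h5, Finset.sum_map]
        exact Finset.sum_congr rfl fun i _ => rfl
      have hmv : Matrix.vecMul c' Mat j = ∑ i : Fin (n - k), c' i * Mat i j := by
        simp [Matrix.vecMul, dotProduct]
      rw [hmv]
      have hMe : ∀ i : Fin (n - k),
          Mat i j = iteratedDerivWithin j.val (y ⟨i.val, hlt i⟩) (Icc a b) b := by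
        intro i
        simp [hMat]
      calc ∑ i : Fin (n - k), c' i * Mat i j
          = ∑ i : Fin (n - k), c' i * iteratedDerivWithin j.val (y ⟨i.val, hlt i⟩) (Icc a b) b :=
            Finset.sum_congr rfl fun i _ => by rw [hMe i]
        _ = ∑ i : Fin n, c i * iteratedDerivWithin j.val (y i) (Icc a b) b := hsplit.symm
        _ = iteratedDerivWithin j.val u (Icc a b) b := hDb.symm
        _ = 0 := hub
    rw [hW]
    exact Matrix.exists_vecMul_eq_zero_iff.mp ⟨c', hc'ne, hvm⟩
  · intro hdet
    obtain ⟨v, hvne, hvm⟩ := Matrix.exists_vecMul_eq_zero_iff.mpr (hW ▸ hdet)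
    have hycd : ∀ i : Fin (n - k), ContDiffOn ℝ n (y ⟨i.val, hlt i⟩) (Icc a b) :=
      fun i => (hy _).1
    refine ⟨fun t => ∑ i : Fin (n - k), v i * y ⟨i.val, hlt i⟩ t,
      ⟨sumCD _ _ _ hycd, ?_, ?_⟩, ?_, ?_⟩
    · intro j hj
      rw [sumD hS haS _ v _ hycd (by omega)]
      apply Finset.sum_eq_zero
      intro i _
      have hi := i.isLt
      rw [(hy _).2.2 j (by omega), if_neg (by simp; omega), mul_zero]
    · intro j hj
      rw [sumD hS hbS _ v _ hycd (by omega)]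
      have hzz := congrFun hvm ⟨j, hj⟩
      simp only [Matrix.vecMul, dotProduct, hMat, Matrix.of_apply, Pi.zero_apply] at hzz
      exact hzz
    · obtain ⟨i0, hi0⟩ := Function.ne_iff.1 hvne
      by_contra hno
      push_neg at hno
      have hm1 : n - 1 - i0.val < n := by omega
      have hDm : iteratedDerivWithin (n - 1 - i0.val)
          (fun t => ∑ i : Fin (n - k), v i * y ⟨i.val, hlt i⟩ t) (Icc a b) a = v i0 := by
        rw [sumD hS haS _ v _ hycd hm1.le]
        rw [Finset.sum_congr rfl (fun i _ => by rw [(hy _).2.2 (n - 1 - i0.val) hm1])]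
        rw [Finset.sum_eq_single i0]
        · rw [if_pos rfl]
          ring
        · intro i _ hne
          rw [if_neg, mul_zero]
          intro hcon
          apply hne
          apply Fin.ext
          have h1 := i.isLt
          have h2 := i0.isLt
          simp only [] at hcon
          omega
        · intro habs
          exact absurd (Finset.mem_univ _) habs
      have hDm0 : iteratedDerivWithin (n - 1 - i0.val)
          (fun t => ∑ i : Fin (n - k), v i * y ⟨i.val, hlt i⟩ t) (Icc a b) a = 0 := by
        have hEq0 : Set.EqOn (fun t => ∑ i : Fin (n - k), v i * y ⟨i.val, hlt i⟩ t)
            (fun _ : ℝ => (0:ℝ)) (Icc a b) := fun t ht => hno _ ht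
        rw [iteratedDerivWithin_congr hEq0 haS]
        exact iterZeroFun hS haS _
      apply hi0
      have : v i0 = 0 := by rw [← hDm, hDm0]
      simpa using this
    · intro t ht
      rw [TnLin A M hS ht _ v _ hycd]
      apply Finset.sum_eq_zero
      intro i _
      rw [(hy _).2.1 t ht, mul_zero]
end

section
/- The sixth-order equation u^{(6)}(t) − 8 u'''(t) = 0 is disconjugate on [0,1]; that is, every nontrivial C^6 solution has at most 5 zeros on [0,1] counted with multiplicity. -/
open Set MeasureTheory

/-- The equation `u⁽ⁿ⁾ + b₁ u⁽ⁿ⁻¹⁾ + ⋯ + bₙ u = 0` (here `b i` denotes `b_{i+1}`,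
the coefficient of `u⁽ⁿ⁻¹⁻ⁱ⁾`) is disconjugate on `J`: every nontrivial `Cⁿ`
solution has at most `n - 1` zeros on `J`, counted with multiplicity. -/
def Disconj (n : ℕ) (b : Fin n → ℝ → ℝ) (J : Set ℝ) : Prop :=
  ∀ u : ℝ → ℝ, ContDiffOn ℝ n u J →
    (∀ t ∈ J, iteratedDerivWithin n u J t
        + ∑ i : Fin n, b i t * iteratedDerivWithin (n - 1 - i.val) u J t = 0) →
    (∃ t ∈ J, u t ≠ 0) → AtMostZeros (n - 1) J u

namespace SixthAux

noncomputable section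

local notation "J" => Icc (0:ℝ) 1

lemma hJu : UniqueDiffOn ℝ (Icc (0:ℝ) 1) := uniqueDiffOn_Icc one_pos

lemma hasDeriv_iter {u : ℝ → ℝ} (hu : ContDiffOn ℝ 6 u J) {k : ℕ} (hk : k < 6)
    {x : ℝ} (hx : x ∈ J) :
    HasDerivWithinAt (iteratedDerivWithin k u J) (iteratedDerivWithin (k+1) u J x) J x := by
  have hd : DifferentiableOn ℝ (iteratedDerivWithin k u J) J :=
    hu.differentiableOn_iteratedDerivWithin (by exact_mod_cast hk) hJu
  have h := (hd x hx).hasDerivWithinAt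
  rwa [← iteratedDerivWithin_succ] at h

def Conf (u : ℝ → ℝ) (k N : ℕ) : Prop :=
  ∃ s : Finset ℝ, ∃ m : ℝ → ℕ,
    (∀ x ∈ s, x ∈ J ∧ ∀ j < m x, iteratedDerivWithin (k + j) u J x = 0) ∧
    N ≤ ∑ x ∈ s, m x

lemma rolleAux {u : ℝ → ℝ} (hu : ContDiffOn ℝ 6 u J) {k : ℕ} (hk : k < 6)
    (s : Finset ℝ) :
    ∀ m : ℝ → ℕ,
    (∀ x ∈ s, x ∈ J ∧ 1 ≤ m x ∧ ∀ j < m x, iteratedDerivWithin (k + j) u J x = 0) →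
    ∃ (s' : Finset ℝ) (m' : ℝ → ℕ),
      (∀ x ∈ s', x ∈ J ∧ ∀ j < m' x, iteratedDerivWithin (k + 1 + j) u J x = 0) ∧
      (∀ x ∈ s', ∃ y ∈ s, y ≤ x) ∧
      ∑ x ∈ s, m x ≤ ∑ x ∈ s', m' x + 1 := by
  classical
  induction s using Finset.induction_on_min with
  | empty => exact fun m _ => ⟨∅, fun _ => 0, by simp, by simp, by simp⟩
  | insert a s₀ hmin IH =>
    intro m hdata
    have hanotin : a ∉ s₀ := fun h => lt_irrefl a (hmin a h)
    obtain ⟨haJ, ham, hader⟩ := hdata a (Finset.mem_insert_self a s₀)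
    have hdata₀ : ∀ x ∈ s₀, x ∈ J ∧ 1 ≤ m x ∧
        ∀ j < m x, iteratedDerivWithin (k + j) u J x = 0 :=
      fun x hx => hdata x (Finset.mem_insert_of_mem hx)
    obtain ⟨s', m', hd', hloc', hsum'⟩ := IH m hdata₀
    have hsum_ins : ∑ x ∈ insert a s₀, m x = m a + ∑ x ∈ s₀, m x :=
      Finset.sum_insert hanotin
    -- data for a at level k+1
    have hader' : ∀ j < m a - 1, iteratedDerivWithin (k + 1 + j) u J a = 0 := by
      intro j hj
      have h := hader (j+1) (by omega)
      have he : k + (j + 1) = k + 1 + j := by omega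
      rwa [he] at h
    rcases s₀.eq_empty_or_nonempty with rfl | hne
    · refine ⟨{a}, fun _ => m a - 1, ?_, ?_, ?_⟩
      · intro x hx
        rw [Finset.mem_singleton] at hx
        subst hx
        exact ⟨haJ, hader'⟩
      · intro x hx
        rw [Finset.mem_singleton] at hx
        exact ⟨a, Finset.mem_insert_self a ∅, hx.ge⟩
      · simp only [Finset.sum_singleton, Finset.sum_empty] at hsum_ins ⊢
        omega
    · -- Rolle between a and b := min of s₀
      set b := s₀.min' hne with hbdef
      have hbmem : b ∈ s₀ := s₀.min'_mem hne
      have hab : a < b := hmin b hbmem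
      obtain ⟨hbJ, hbm, hbder⟩ := hdata₀ b hbmem
      have hfa : iteratedDerivWithin k u J a = 0 := by
        have := hader 0 (by omega); simpa using this
      have hfb : iteratedDerivWithin k u J b = 0 := by
        have := hbder 0 (by omega); simpa using this
      have hcont : ContinuousOn (iteratedDerivWithin k u J) (Icc a b) :=
        ((hu.differentiableOn_iteratedDerivWithin (by exact_mod_cast hk)
          hJu).continuousOn).mono (Icc_subset_Icc haJ.1 hbJ.2)
      have hderiv : ∀ x ∈ Ioo a b,
          HasDerivAt (iteratedDerivWithin k u J) (iteratedDerivWithin (k+1) u J x) x := by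
        intro x hx
        have hxJ : x ∈ J := ⟨haJ.1.trans hx.1.le, hx.2.le.trans hbJ.2⟩
        exact (hasDeriv_iter hu hk hxJ).hasDerivAt
          (Icc_mem_nhds (lt_of_le_of_lt haJ.1 hx.1) (lt_of_lt_of_le hx.2 hbJ.2))
      obtain ⟨c, hc, hc0⟩ := exists_hasDerivAt_eq_zero hab hcont (hfa.trans hfb.symm) hderiv
      have hcJ : c ∈ J := ⟨haJ.1.trans hc.1.le, hc.2.le.trans hbJ.2⟩
      have hbs' : ∀ x ∈ s', b ≤ x := by
        intro x hx
        obtain ⟨y, hy, hyx⟩ := hloc' x hx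
        exact (s₀.min'_le y hy).trans hyx
      have hcnots' : c ∉ s' := fun h => absurd (hbs' c h) (not_le.mpr hc.2)
      have hanots' : a ∉ s' := fun h => absurd (hbs' a h) (not_le.mpr hab)
      have hca : c ≠ a := ne_of_gt hc.1
      refine ⟨insert c (insert a s'),
        Function.update (Function.update m' c 1) a (m a - 1), ?_, ?_, ?_⟩
      · intro x hx
        rcases Finset.mem_insert.mp hx with rfl | hx
        · refine ⟨hcJ, ?_⟩
          rw [Function.update_of_ne hca, Function.update_self]
          intro j hj
          interval_cases j
          simpa using hc0
        rcases Finset.mem_insert.mp hx with rfl | hx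
        · rw [Function.update_self]
          exact ⟨haJ, hader'⟩
        · have hxa : x ≠ a := fun h => hanots' (h ▸ hx)
          have hxc : x ≠ c := fun h => hcnots' (h ▸ hx)
          rw [Function.update_of_ne hxa, Function.update_of_ne hxc]
          exact hd' x hx
      · intro x hx
        rcases Finset.mem_insert.mp hx with h | hx
        · exact ⟨a, Finset.mem_insert_self a s₀, h ▸ hc.1.le⟩
        rcases Finset.mem_insert.mp hx with h | hx
        · exact ⟨a, Finset.mem_insert_self a s₀, h.ge⟩
        · obtain ⟨y, hy, hyx⟩ := hloc' x hx
          exact ⟨y, Finset.mem_insert_of_mem hy, hyx⟩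
      · have h1 : ∑ x ∈ insert c (insert a s'),
            Function.update (Function.update m' c 1) a (m a - 1) x
            = 1 + ((m a - 1) + ∑ x ∈ s', m' x) := by
          rw [Finset.sum_insert (by
            simp only [Finset.mem_insert]
            push_neg
            exact ⟨hca, hcnots'⟩), Finset.sum_insert hanots']
          congr 1
          · rw [Function.update_of_ne hca, Function.update_self]
          congr 1
          · rw [Function.update_self]
          · apply Finset.sum_congr rfl
            intro x hx
            have hxa : x ≠ a := fun h => hanots' (h ▸ hx)
            have hxc : x ≠ c := fun h => hcnots' (h ▸ hx)
            rw [Function.update_of_ne hxa, Function.update_of_ne hxc]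
        rw [h1, hsum_ins]
        omega

lemma rolleStep {u : ℝ → ℝ} (hu : ContDiffOn ℝ 6 u J) {k N : ℕ} (hk : k < 6)
    (h : Conf u k (N + 1)) : Conf u (k + 1) N := by
  classical
  obtain ⟨s, m, hdata, hsum⟩ := h
  have hfil : ∑ x ∈ s.filter (fun x => 0 < m x), m x = ∑ x ∈ s, m x :=
    Finset.sum_filter_of_ne (fun x _ hx => Nat.pos_of_ne_zero hx)
  obtain ⟨s', m', hd', _, hsum'⟩ := rolleAux hu hk (s.filter (fun x => 0 < m x))
    m (fun x hx => by
      have hx' := Finset.mem_filter.mp hx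
      exact ⟨(hdata x hx'.1).1, hx'.2, (hdata x hx'.1).2⟩)
  exact ⟨s', m', hd', by omega⟩

lemma conf_exists_zero {u : ℝ → ℝ} {k N : ℕ} (h : Conf u k (N + 1)) :
    ∃ x ∈ J, iteratedDerivWithin k u J x = 0 := by
  obtain ⟨s, m, hdata, hsum⟩ := h
  by_contra hcon
  push_neg at hcon
  have : ∑ x ∈ s, m x = 0 := by
    apply Finset.sum_eq_zero
    intro x hx
    obtain ⟨hxJ, hder⟩ := hdata x hx
    by_contra hmx
    exact hcon x hxJ (by simpa using hder 0 (Nat.pos_of_ne_zero hmx))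
  omega

lemma constJ {f : ℝ → ℝ} (hf : ∀ x ∈ J, HasDerivWithinAt f 0 J x) :
    ∀ x ∈ J, f x = f 0 := by
  apply constant_of_has_deriv_right_zero
  · exact fun x hx => (hf x hx).continuousWithinAt
  · intro x hx
    have h := (hf x ⟨hx.1, hx.2.le⟩).mono (Icc_subset_Icc_left hx.1)
    rw [← Ici_inter_Iic] at h
    exact (hasDerivWithinAt_inter (Iic_mem_nhds hx.2)).mp h

lemma energy {χ χd : ℝ → ℝ}
    (hχ : ∀ x ∈ J, HasDerivWithinAt χ (χd x) J x)
    (hχd : ∀ x ∈ J, HasDerivWithinAt χd (-3 * χ x) J x)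
    {x₀ : ℝ} (hx₀ : x₀ ∈ J) (h0 : χ x₀ = 0) (h1 : χd x₀ = 0) :
    ∀ x ∈ J, χ x = 0 := by
  have hE : ∀ x ∈ J, HasDerivWithinAt (fun t => χd t ^ 2 + 3 * χ t ^ 2) 0 J x := by
    intro x hx
    have h := ((hχd x hx).pow 2).add (((hχ x hx).pow 2).const_mul 3)
    refine h.congr_deriv ?_
    push_cast
    ring
  have hc := constJ hE
  have hz : χd x₀ ^ 2 + 3 * χ x₀ ^ 2 = 0 := by rw [h0, h1]; ring
  intro x hx
  have h1 := hc x hx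
  have h2 := hc x₀ hx₀
  nlinarith [sq_nonneg (χ x), sq_nonneg (χd x)]

lemma two_zeros {χ χd : ℝ → ℝ}
    (hχ : ∀ x ∈ J, HasDerivWithinAt χ (χd x) J x)
    (hχd : ∀ x ∈ J, HasDerivWithinAt χd (-3 * χ x) J x)
    {a b : ℝ} (ha : a ∈ J) (hb : b ∈ J) (hab : a < b)
    (h0 : χ a = 0) (h1 : χ b = 0) : ∀ x ∈ J, χ x = 0 := by
  set sn : ℝ → ℝ := fun t => Real.sin (Real.sqrt 3 * (t - a)) with hsn
  set sd : ℝ → ℝ := fun t => Real.cos (Real.sqrt 3 * (t - a)) * Real.sqrt 3 with hsd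
  have harg : ∀ t, HasDerivAt (fun t => Real.sqrt 3 * (t - a)) (Real.sqrt 3) t := by
    intro t
    simpa using ((hasDerivAt_id t).sub_const a).const_mul (Real.sqrt 3)
  have hs : ∀ t, HasDerivAt sn (sd t) t := fun t => (harg t).sin
  have hsd' : ∀ t, HasDerivAt sd (-3 * sn t) t := by
    intro t
    have h := ((harg t).cos).mul_const (Real.sqrt 3)
    refine h.congr_deriv ?_
    have h3 : Real.sqrt 3 * Real.sqrt 3 = 3 := Real.mul_self_sqrt (by norm_num)
    simp only [hsn]
    linear_combination (-Real.sin (Real.sqrt 3 * (t - a))) * h3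
  have hW : ∀ x ∈ J, HasDerivWithinAt (fun t => χd t * sn t - χ t * sd t) 0 J x := by
    intro x hx
    have h := ((hχd x hx).mul (hs x).hasDerivWithinAt).sub
      ((hχ x hx).mul (hsd' x).hasDerivWithinAt)
    refine h.congr_deriv ?_
    ring
  have hc := constJ hW
  have hWa : χd a * sn a - χ a * sd a = 0 := by
    simp [hsn, h0]
  have hWb : χd b * sn b - χ b * sd b = 0 := by
    rw [hc b hb, ← hc a ha, hWa]
  have hsnb : 0 < sn b := by
    apply Real.sin_pos_of_pos_of_lt_pi
    · exact mul_pos (Real.sqrt_pos.mpr (by norm_num)) (sub_pos.mpr hab)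
    · have h2 : Real.sqrt 3 < 2 := by
        nlinarith [Real.sq_sqrt (show (0:ℝ) ≤ 3 by norm_num), Real.sqrt_nonneg 3]
      have hba : b - a ≤ 1 := by
        have := ha.1; have := hb.2; linarith
      have : Real.sqrt 3 * (b - a) ≤ Real.sqrt 3 * 1 := by
        apply mul_le_mul_of_nonneg_left hba (Real.sqrt_nonneg 3)
      nlinarith [Real.pi_gt_three]
  have hχdb : χd b = 0 := by
    rw [h1] at hWb
    simp only [zero_mul, sub_zero] at hWb
    exact (mul_eq_zero.mp hWb).resolve_right (ne_of_gt hsnb)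
  exact energy hχ hχd hb h1 hχdb

lemma v_zero {u : ℝ → ℝ} (hu : ContDiffOn ℝ 6 u J)
    (hode : ∀ t ∈ J, iteratedDerivWithin 6 u J t = 8 * iteratedDerivWithin 3 u J t)
    (hconf : Conf u 3 3) : ∀ x ∈ J, iteratedDerivWithin 3 u J x = 0 := by
  classical
  set v : ℝ → ℝ := iteratedDerivWithin 3 u J with hvdef
  set v₁ : ℝ → ℝ := iteratedDerivWithin 4 u J with hv1def
  set v₂ : ℝ → ℝ := iteratedDerivWithin 5 u J with hv2def
  have hvd : ∀ x ∈ J, HasDerivWithinAt v (v₁ x) J x := fun x hx => by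
    have h := hasDeriv_iter hu (show (3:ℕ) < 6 by norm_num) hx
    norm_num at h
    exact h
  have hv1d : ∀ x ∈ J, HasDerivWithinAt v₁ (v₂ x) J x := fun x hx => by
    have h := hasDeriv_iter hu (show (4:ℕ) < 6 by norm_num) hx
    norm_num at h
    exact h
  have hv2d : ∀ x ∈ J, HasDerivWithinAt v₂ (8 * v x) J x := fun x hx => by
    have h := hasDeriv_iter hu (show (5:ℕ) < 6 by norm_num) hx
    norm_num at h
    rwa [hode x hx] at h
  set χ : ℝ → ℝ := fun t => Real.exp t * (v₁ t - 2 * v t) with hχdef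
  set χd : ℝ → ℝ := fun t => Real.exp t * (v₂ t - v₁ t - 2 * v t) with hχddef
  have hχ : ∀ x ∈ J, HasDerivWithinAt χ (χd x) J x := by
    intro x hx
    have h := ((Real.hasDerivAt_exp x).hasDerivWithinAt).mul
      ((hv1d x hx).sub ((hvd x hx).const_mul 2))
    refine h.congr_deriv ?_
    simp only [hχddef, Pi.sub_apply]
    ring
  have hχd : ∀ x ∈ J, HasDerivWithinAt χd (-3 * χ x) J x := by
    intro x hx
    have h := ((Real.hasDerivAt_exp x).hasDerivWithinAt).mul
      (((hv2d x hx).sub (hv1d x hx)).sub ((hvd x hx).const_mul 2))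
    refine h.congr_deriv ?_
    simp only [hχdef, Pi.sub_apply]
    ring
  -- simple zero transfers
  have hχ0 : ∀ x, v x = 0 → v₁ x = 0 → χ x = 0 := by
    intro x h1 h2; simp [hχdef, h1, h2]
  -- Rolle between two zeros of v gives a zero of χ strictly between
  have hvcont : ContinuousOn v J :=
    (hu.differentiableOn_iteratedDerivWithin (show ((3:ℕ):WithTop ℕ∞) < 6 by exact_mod_cast (by norm_num : (3:ℕ) < 6)) hJu).continuousOn
  have rolleφ : ∀ p q : ℝ, p ∈ J → q ∈ J → p < q → v p = 0 → v q = 0 →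
      ∃ c, c ∈ J ∧ p < c ∧ c < q ∧ χ c = 0 := by
    intro p q hp hq hpq hvp hvq
    have hcont : ContinuousOn (fun t => Real.exp (-2 * t) * v t) (Icc p q) := by
      apply ContinuousOn.mul
      · exact (Real.continuous_exp.comp (continuous_const.mul continuous_id)).continuousOn
      · exact hvcont.mono (Icc_subset_Icc hp.1 hq.2)
    have hderiv : ∀ x ∈ Ioo p q, HasDerivAt (fun t => Real.exp (-2 * t) * v t)
        (Real.exp (-2 * x) * (v₁ x - 2 * v x)) x := by
      intro x hx
      have hxJ : x ∈ J := ⟨hp.1.trans hx.1.le, hx.2.le.trans hq.2⟩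
      have hex : HasDerivAt (fun t => Real.exp (-2 * t)) (Real.exp (-2 * x) * (-2)) x := by
        exact ((hasDerivAt_id x).const_mul (-2)).exp.congr_deriv (by norm_num)
      have hvx : HasDerivAt v (v₁ x) x :=
        (hvd x hxJ).hasDerivAt (Icc_mem_nhds (lt_of_le_of_lt hp.1 hx.1) (lt_of_lt_of_le hx.2 hq.2))
      have h := hex.mul hvx
      refine h.congr_deriv ?_
      ring
    have hpq0 : (fun t => Real.exp (-2 * t) * v t) p = (fun t => Real.exp (-2 * t) * v t) q := by
      simp [hvp, hvq]
    obtain ⟨c, hc, hc0⟩ := exists_hasDerivAt_eq_zero hpq hcont hpq0 hderiv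
    refine ⟨c, ⟨hp.1.trans hc.1.le, hc.2.le.trans hq.2⟩, hc.1, hc.2, ?_⟩
    have hne : Real.exp (-2 * c) ≠ 0 := Real.exp_ne_zero _
    have : v₁ c - 2 * v c = 0 := by
      rcases mul_eq_zero.mp hc0 with h | h
      · exact absurd h hne
      · exact h
    simp [hχdef, this]
  -- extract zero configuration of v
  obtain ⟨s, m, hdata, hsum⟩ := hconf
  set sf := s.filter (fun x => 0 < m x) with hsfdef
  have hsum' : 3 ≤ ∑ x ∈ sf, m x := by
    rwa [hsfdef, Finset.sum_filter_of_ne (fun x _ hx => Nat.pos_of_ne_zero hx)]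
  have hsf : ∀ x ∈ sf, x ∈ J ∧ 0 < m x ∧ v x = 0 := by
    intro x hx
    obtain ⟨hxs, hxm⟩ := Finset.mem_filter.mp hx
    obtain ⟨hxJ, hder⟩ := hdata x hxs
    exact ⟨hxJ, hxm, by simpa using hder 0 hxm⟩
  have hdouble : ∀ x ∈ sf, 2 ≤ m x → v₁ x = 0 := by
    intro x hx h2
    obtain ⟨hxs, _⟩ := Finset.mem_filter.mp hx
    have := (hdata x hxs).2 1 (by omega)
    simpa using this
  have htriple : ∀ x ∈ sf, 3 ≤ m x → v₂ x = 0 := by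
    intro x hx h3
    obtain ⟨hxs, _⟩ := Finset.mem_filter.mp hx
    have := (hdata x hxs).2 2 (by omega)
    simpa using this
  have hsfne : sf.Nonempty := by
    by_contra h
    rw [Finset.not_nonempty_iff_eq_empty] at h
    rw [h] at hsum'
    simp at hsum'
  -- main claim : χ vanishes identically on J
  have hχzero : ∀ x ∈ J, χ x = 0 := by
    by_cases h3 : ∃ x ∈ sf, 3 ≤ m x
    · obtain ⟨x, hx, hx3⟩ := h3
      obtain ⟨hxJ, _, hvx⟩ := hsf x hx
      have hv1x : v₁ x = 0 := hdouble x hx (by omega)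
      have hv2x : v₂ x = 0 := htriple x hx hx3
      have hχx : χ x = 0 := hχ0 x hvx hv1x
      have hχdx : χd x = 0 := by simp [hχddef, hvx, hv1x, hv2x]
      exact energy hχ hχd hxJ hχx hχdx
    · push_neg at h3
      by_cases h2 : ∃ x ∈ sf, 2 ≤ m x
      · obtain ⟨x, hx, hx2⟩ := h2
        obtain ⟨hxJ, _, hvx⟩ := hsf x hx
        have hv1x : v₁ x = 0 := hdouble x hx hx2
        have hχx : χ x = 0 := hχ0 x hvx hv1x
        -- find another point
        have hmx : m x ≤ 2 := by have := h3 x hx; omega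
        have hsplit : m x + ∑ y ∈ sf.erase x, m y = ∑ y ∈ sf, m y :=
          Finset.add_sum_erase sf m hx
        have herane : (sf.erase x).Nonempty := by
          by_contra h
          rw [Finset.not_nonempty_iff_eq_empty] at h
          rw [h] at hsplit
          simp at hsplit
          omega
        obtain ⟨y, hy⟩ := herane
        have hyx : y ≠ x := Finset.ne_of_mem_erase hy
        have hysf : y ∈ sf := Finset.mem_of_mem_erase hy
        obtain ⟨hyJ, _, hvy⟩ := hsf y hysf
        rcases lt_or_gt_of_ne hyx with hlt | hgt
        · obtain ⟨c, hcJ, hc1, hc2, hχc⟩ := rolleφ y x hyJ hxJ hlt hvy hvx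
          exact two_zeros hχ hχd hcJ hxJ hc2 hχc hχx
        · obtain ⟨c, hcJ, hc1, hc2, hχc⟩ := rolleφ x y hxJ hyJ hgt hvx hvy
          exact two_zeros hχ hχd hxJ hcJ hc1 hχx hχc
      · push_neg at h2
        -- all multiplicities are 1 ; at least three points
        have hm1 : ∀ x ∈ sf, m x = 1 := by
          intro x hx
          have h1 := (hsf x hx).2.1
          have h2' := h2 x hx
          omega
        have hcard : 3 ≤ sf.card := by
          have : ∑ x ∈ sf, m x = sf.card := by
            rw [Finset.card_eq_sum_ones]
            exact Finset.sum_congr rfl hm1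
          omega
        -- three ordered points
        set p := sf.min' hsfne with hpdef
        have hpmem : p ∈ sf := sf.min'_mem hsfne
        have hne1 : (sf.erase p).Nonempty := by
          rw [← Finset.card_pos, Finset.card_erase_of_mem hpmem]
          omega
        set q := (sf.erase p).min' hne1 with hqdef
        have hqmem' : q ∈ sf.erase p := (sf.erase p).min'_mem hne1
        have hqmem : q ∈ sf := Finset.mem_of_mem_erase hqmem'
        have hpq : p < q :=
          lt_of_le_of_ne (sf.min'_le q hqmem) (Ne.symm (Finset.ne_of_mem_erase hqmem'))
        have hne2 : ((sf.erase p).erase q).Nonempty := by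
          rw [← Finset.card_pos, Finset.card_erase_of_mem hqmem',
            Finset.card_erase_of_mem hpmem]
          omega
        set w := ((sf.erase p).erase q).min' hne2 with hwdef
        have hwmem' : w ∈ (sf.erase p).erase q := ((sf.erase p).erase q).min'_mem hne2
        have hwmem'' : w ∈ sf.erase p := Finset.mem_of_mem_erase hwmem'
        have hwmem : w ∈ sf := Finset.mem_of_mem_erase hwmem''
        have hqw : q < w :=
          lt_of_le_of_ne ((sf.erase p).min'_le w hwmem'') (Ne.symm (Finset.ne_of_mem_erase hwmem'))
        obtain ⟨hpJ, _, hvp⟩ := hsf p hpmem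
        obtain ⟨hqJ, _, hvq⟩ := hsf q hqmem
        obtain ⟨hwJ, _, hvw⟩ := hsf w hwmem
        obtain ⟨c₁, hc₁J, _, hc₁2, hχc₁⟩ := rolleφ p q hpJ hqJ hpq hvp hvq
        obtain ⟨c₂, hc₂J, hc₂1, _, hχc₂⟩ := rolleφ q w hqJ hwJ hqw hvq hvw
        exact two_zeros hχ hχd hc₁J hc₂J (hc₁2.trans hc₂1) hχc₁ hχc₂
  -- from χ ≡ 0 we get v₁ = 2 v on J hence φ' = 0 and φ is constant
  have hφd : ∀ x ∈ J, HasDerivWithinAt (fun t => Real.exp (-2 * t) * v t) 0 J x := by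
    intro x hx
    have hex : HasDerivAt (fun t => Real.exp (-2 * t)) (Real.exp (-2 * x) * (-2)) x :=
      ((hasDerivAt_id x).const_mul (-2)).exp.congr_deriv (by norm_num)
    have h := (hex.hasDerivWithinAt).mul (hvd x hx)
    have hval : v₁ x - 2 * v x = 0 := by
      have hcx := hχzero x hx
      simp only [hχdef] at hcx
      rcases mul_eq_zero.mp hcx with h' | h'
      · exact absurd h' (Real.exp_ne_zero x)
      · exact h'
    refine h.congr_deriv ?_
    have : v₁ x = 2 * v x := by linarith
    rw [this]
    ring
  have hφc := constJ hφd
  have hφc' : ∀ x ∈ J, Real.exp (-2 * x) * v x = Real.exp (-2 * (0:ℝ)) * v 0 :=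
    fun x hx => hφc x hx
  obtain ⟨z, hz⟩ := hsfne
  obtain ⟨hzJ, _, hvz⟩ := hsf z hz
  have h0 : Real.exp (-2 * (0:ℝ)) * v 0 = 0 := by
    rw [← hφc' z hzJ, hvz, mul_zero]
  intro x hx
  have hx0 := hφc' x hx
  rw [h0] at hx0
  rcases mul_eq_zero.mp hx0 with h' | h'
  · exact absurd h' (Real.exp_ne_zero _)
  · exact h'

end

end SixthAux

open SixthAux in
/-- `u⁽⁶⁾ - 8 u''' = 0` is disconjugate on `[0,1]`. -/
theorem sixth_order_example_disconjugate :
    Disconj 6 ![fun _ => 0, fun _ => 0, fun _ => -8, fun _ => 0, fun _ => 0, fun _ => 0]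
      (Icc (0 : ℝ) 1) := by
  intro u hu hode hnt
  intro r t m hinj htJ hmpos hz
  by_contra hle
  have h6 : 6 ≤ ∑ i, m i := by omega
  classical
  have hu6 : ContDiffOn ℝ 6 u (Icc (0:ℝ) 1) := hu
  have hode' : ∀ x ∈ Icc (0:ℝ) 1, iteratedDerivWithin 6 u (Icc (0:ℝ) 1) x
      = 8 * iteratedDerivWithin 3 u (Icc (0:ℝ) 1) x := by
    intro x hx
    have h := hode x hx
    rw [Fin.sum_univ_six] at h
    have h' : iteratedDerivWithin 6 u (Icc (0:ℝ) 1) x +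
        ((0:ℝ) * iteratedDerivWithin 5 u (Icc (0:ℝ) 1) x
          + (0:ℝ) * iteratedDerivWithin 4 u (Icc (0:ℝ) 1) x
          + (-8:ℝ) * iteratedDerivWithin 3 u (Icc (0:ℝ) 1) x
          + (0:ℝ) * iteratedDerivWithin 2 u (Icc (0:ℝ) 1) x
          + (0:ℝ) * iteratedDerivWithin 1 u (Icc (0:ℝ) 1) x
          + (0:ℝ) * iteratedDerivWithin 0 u (Icc (0:ℝ) 1) x) = 0 := h
    linarith
  have hconf0 : Conf u 0 6 := by
    refine ⟨Finset.univ.image t,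
      fun x => if h : ∃ i, t i = x then m h.choose else 0, ?_, ?_⟩
    · intro x hx
      obtain ⟨i, -, rfl⟩ := Finset.mem_image.mp hx
      have hex : ∃ i', t i' = t i := ⟨i, rfl⟩
      have hch : hex.choose = i := hinj hex.choose_spec
      refine ⟨htJ i, ?_⟩
      intro j hj
      have hj' : j < m i := by
        have hj2 : j < (if h : ∃ i', t i' = t i then m h.choose else 0) := hj
        rwa [dif_pos hex, hch] at hj2
      simpa using hz i j hj'
    · rw [Finset.sum_image (fun i _ j _ h => hinj h)]
      have heq : ∀ i ∈ Finset.univ,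
          (if h : ∃ i', t i' = t i then m h.choose else 0) = m i := by
        intro i _
        have hex : ∃ i', t i' = t i := ⟨i, rfl⟩
        rw [dif_pos hex, hinj hex.choose_spec]
      rw [Finset.sum_congr rfl heq]
      exact h6
  have hc1 : Conf u 1 5 := rolleStep hu6 (by norm_num) hconf0
  have hc2 : Conf u 2 4 := rolleStep hu6 (by norm_num) hc1
  have hc3 : Conf u 3 3 := rolleStep hu6 (by norm_num) hc2
  have hv := v_zero hu6 hode' hc3
  -- cascade down
  obtain ⟨x₂, hx₂J, hx₂⟩ := conf_exists_zero (N := 3) hc2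
  obtain ⟨x₁, hx₁J, hx₁⟩ := conf_exists_zero (N := 4) hc1
  obtain ⟨x₀, hx₀J, hx₀⟩ := conf_exists_zero (N := 5) hconf0
  have h2 : ∀ x ∈ Icc (0:ℝ) 1, iteratedDerivWithin 2 u (Icc (0:ℝ) 1) x = 0 := by
    have hconst := constJ (f := iteratedDerivWithin 2 u (Icc (0:ℝ) 1)) (fun x hx => by
      have h := hasDeriv_iter hu6 (show (2:ℕ) < 6 by norm_num) hx
      norm_num at h
      rwa [hv x hx] at h)
    intro x hx
    have hA := hconst x hx
    have hB := hconst x₂ hx₂J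
    rw [hx₂] at hB
    rw [hA, ← hB]
  have h1 : ∀ x ∈ Icc (0:ℝ) 1, iteratedDerivWithin 1 u (Icc (0:ℝ) 1) x = 0 := by
    have hconst := constJ (f := iteratedDerivWithin 1 u (Icc (0:ℝ) 1)) (fun x hx => by
      have h := hasDeriv_iter hu6 (show (1:ℕ) < 6 by norm_num) hx
      norm_num at h
      rwa [h2 x hx, ← iteratedDerivWithin_one] at h)
    intro x hx
    have hA := hconst x hx
    have hB := hconst x₁ hx₁J
    rw [hx₁] at hB
    rw [hA, ← hB]
  have h0 : ∀ x ∈ Icc (0:ℝ) 1, u x = 0 := by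
    have hconst := constJ (f := u) (fun x hx => by
      have h := hasDeriv_iter hu6 (show (0:ℕ) < 6 by norm_num) hx
      simp only [Nat.zero_add, iteratedDerivWithin_zero, iteratedDerivWithin_one] at h
      rwa [← iteratedDerivWithin_one, h1 x hx] at h)
    intro x hx
    obtain ⟨x₀', hx₀J', hx₀'⟩ : ∃ y ∈ Icc (0:ℝ) 1, u y = 0 := by
      refine ⟨x₀, hx₀J, ?_⟩
      simpa using hx₀
    have hA := hconst x hx
    have hB := hconst x₀' hx₀J'
    rw [hx₀'] at hB
    rw [hA, ← hB]
  obtain ⟨t₀, ht₀, hne⟩ := hnt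
  exact hne (h0 t₀ ht₀)
end
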